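/- Let p ≥ q > 0 and let aₙ, λₙ > 0 for n ≥ 1, with Λₙ = λ₁+⋯+λₙ and Aₙ = λ₁a₁+⋯+λₙaₙ. Then for every N ≥ 1, ∑_{n=1}^N λₙ·(Aₙ/Λₙ)^(-p) ≤ ((p+1)/p)^q · ∑_{n=1}^N λₙ·(Aₙ/Λₙ)^(-p+q)·aₙ^(-q) − (q/(p+1))·Λ_N·(A_N/Λ_N)^(-p). -/

import Mathlib

/-!
Write `M = A / Λ` for the weighted means, `c = q / (p + 1)` and `K = ((p + 1) / p) ^ q`. The proof
telescopes the one-step inequality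

  `λ M'^(-p) + c Λ' M'^(-p) ≤ c Λ M^(-p) + K λ M'^(-p+q) a^(-q)`,
  `Λ' = Λ + λ`, `Λ' M' = Λ M + λ a`,

starting from `Λ 0 = 0`. The step comes from two instances of the weighted AM–GM inequality
`1 + r - r / x ≤ x ^ r`: the tangent line of the convex function `x ↦ x ^ (-p)` at `M'` bounds
`Λ M^(-p)` from below, and a Young-type estimate absorbs what is left.
-/

open Finset Real

theorem one_add_sub_div_le_rpow {x r : ℝ} (hx : 0 < x) (hr : 0 ≤ r) :
    1 + r - r / x ≤ x ^ r := by
  have bernoulli := one_add_mul_self_le_rpow_one_add (s := x - 1) (by linarith) (p := r + 1)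
    (by linarith)
  rw [add_sub_cancel, rpow_add_one hx.ne'] at bernoulli
  calc 1 + r - r / x = (1 + (r + 1) * (x - 1)) / x := by field_simp; ring
    _ ≤ x ^ r := by rwa [div_le_iff₀ hx]

theorem rpow_neg_mul_le_rpow_neg {α β p : ℝ} (hα : 0 < α) (hβ : 0 < β) (hp : 0 ≤ p) :
    α ^ (-p) * (1 + p - p / (α / β)) ≤ β ^ (-p) := by
  calc α ^ (-p) * (1 + p - p / (α / β)) ≤ α ^ (-p) * (α / β) ^ p :=
        mul_le_mul_of_nonneg_left (one_add_sub_div_le_rpow (by positivity) hp) (by positivity)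
    _ = β ^ (-p) := by
        rw [div_rpow hα.le hβ.le, rpow_neg hα.le, rpow_neg hβ.le]
        field_simp

theorem hardy_rpow_neg_step {p q Λ lam α β a : ℝ} (hp : 0 < p) (hq : 0 ≤ q) (hΛ : 0 ≤ Λ)
    (hlam : 0 < lam) (hβ : 0 < β) (ha : 0 < a) (hα : (Λ + lam) * α = Λ * β + lam * a) :
    lam * α ^ (-p) + q / (p + 1) * (Λ + lam) * α ^ (-p)
      ≤ q / (p + 1) * Λ * β ^ (-p) + ((p + 1) / p) ^ q * lam * α ^ (-p + q) * a ^ (-q) := by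
  have hα_pos : 0 < α := by
    have : 0 < (Λ + lam) * α := hα ▸ by positivity
    exact pos_of_mul_pos_right this (by positivity)
  have tangent : q / (p + 1) * Λ * (α ^ (-p) * (1 + p - p / (α / β)))
      ≤ q / (p + 1) * Λ * β ^ (-p) :=
    mul_le_mul_of_nonneg_left (rpow_neg_mul_le_rpow_neg hα_pos hβ hp.le) (by positivity)
  have young : lam * α ^ (-p) * (1 + q - q / ((p + 1) / p * (α / a)))
      ≤ lam * α ^ (-p) * ((p + 1) / p * (α / a)) ^ q :=
    mul_le_mul_of_nonneg_left (one_add_sub_div_le_rpow (by positivity) hq) (by positivity)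
  have young_rhs : lam * α ^ (-p) * ((p + 1) / p * (α / a)) ^ q
      = ((p + 1) / p) ^ q * lam * α ^ (-p + q) * a ^ (-q) := by
    rw [mul_rpow (by positivity) (by positivity), div_rpow hα_pos.le ha.le, rpow_add hα_pos,
      rpow_neg ha.le]
    ring
  have regroup : q / (p + 1) * Λ * (α ^ (-p) * (1 + p - p / (α / β)))
      + lam * α ^ (-p) * (1 + q - q / ((p + 1) / p * (α / a)))
      = lam * α ^ (-p) + q / (p + 1) * (Λ + lam) * α ^ (-p) := by
    generalize α ^ (-p) = P
    field_simp
    linear_combination p * q * P * hα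
  linarith

theorem mul_rpow_div_eq_of_eq_mul {x y z : ℝ} (r : ℝ) (h : y = x * z) :
    x * (y / x) ^ r = x * z ^ r := by
  rcases eq_or_ne x 0 with rfl | hx
  · simp
  · rw [h, mul_div_cancel_left₀ z hx]

theorem sum_Icc_one_pos {f : ℕ → ℝ} (hf : ∀ n, 1 ≤ n → 0 < f n) {n : ℕ} (hn : 1 ≤ n) :
    0 < ∑ i ∈ Icc 1 n, f i :=
  sum_pos (fun i hi => hf i (mem_Icc.mp hi).1) ⟨1, mem_Icc.mpr ⟨le_rfl, hn⟩⟩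

theorem stmt4_general (p q : ℝ) (hq : 0 < q) (hpq : q ≤ p)
    (a l : ℕ → ℝ) (ha : ∀ n, 1 ≤ n → 0 < a n) (hl : ∀ n, 1 ≤ n → 0 < l n)
    (L A : ℕ → ℝ)
    (hL : ∀ n, L n = ∑ i ∈ Finset.Icc 1 n, l i)
    (hA : ∀ n, A n = ∑ i ∈ Finset.Icc 1 n, l i * a i)
    (N : ℕ) :
    (∑ n ∈ Finset.Icc 1 N, l n * (A n / L n) ^ (-p))
      ≤ ((p + 1) / p) ^ q * (∑ n ∈ Finset.Icc 1 N, l n * (A n / L n) ^ (-p + q) * (a n) ^ (-q))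
        - (q / (p + 1)) * L N * (A N / L N) ^ (-p) := by
  have hp : 0 < p := hq.trans_le hpq
  have hL_pos n (hn : 1 ≤ n) : 0 < L n := hL n ▸ sum_Icc_one_pos hl hn
  have hA_pos n (hn : 1 ≤ n) : 0 < A n :=
    hA n ▸ sum_Icc_one_pos (fun i hi => mul_pos (hl i hi) (ha i hi)) hn
  suffices telescoped : ∀ N, ∑ n ∈ Icc 1 N, l n * (A n / L n) ^ (-p)
      + q / (p + 1) * L N * (A N / L N) ^ (-p)
      ≤ ((p + 1) / p) ^ q * ∑ n ∈ Icc 1 N, l n * (A n / L n) ^ (-p + q) * a n ^ (-q) by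
    linarith [telescoped N]
  intro N
  induction N with
  | zero => simp [hL]
  | succ n ih =>
    have hL_succ : L (n + 1) = L n + l (n + 1) := by rw [hL, hL, sum_Icc_succ_top (by omega)]
    have hA_succ : A (n + 1) = A n + l (n + 1) * a (n + 1) := by
      rw [hA, hA, sum_Icc_succ_top (by omega)]
    obtain ⟨β, hβ, hAβ⟩ : ∃ β > 0, A n = L n * β := by
      rcases n.eq_zero_or_pos with rfl | hn
      -- `A 0 / L 0 = 0 / 0` is junk, but `L 0 = 0` kills every term it appears in.
      · exact ⟨1, one_pos, by simp [hA, hL]⟩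
      · exact ⟨A n / L n, div_pos (hA_pos n hn) (hL_pos n hn),
          (mul_div_cancel₀ _ (hL_pos n hn).ne').symm⟩
    have hmean : (L n + l (n + 1)) * (A (n + 1) / L (n + 1))
        = L n * β + l (n + 1) * a (n + 1) := by
      rw [← hL_succ, mul_div_cancel₀ _ (hL_pos (n + 1) (by omega)).ne', hA_succ, hAβ]
    have step := hardy_rpow_neg_step hp hq.le
      (hL n ▸ sum_nonneg fun i hi => (hl i (mem_Icc.mp hi).1).le)
      (hl (n + 1) (by omega)) hβ (ha (n + 1) (by omega)) hmean
    rw [← hL_succ] at step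
    rw [mul_assoc _ (L n), mul_rpow_div_eq_of_eq_mul _ hAβ] at ih
    rw [sum_Icc_succ_top (by omega), sum_Icc_succ_top (by omega)]
    linarith

theorem stmt4 (p q : ℝ) (hq : 0 < q) (hpq : q ≤ p)
    (a l : ℕ → ℝ) (ha : ∀ n, 1 ≤ n → 0 < a n) (hl : ∀ n, 1 ≤ n → 0 < l n)
    (L A : ℕ → ℝ)
    (hL : ∀ n, L n = ∑ i ∈ Finset.Icc 1 n, l i)
    (hA : ∀ n, A n = ∑ i ∈ Finset.Icc 1 n, l i * a i)
    (N : ℕ) (hN : 1 ≤ N) :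
    (∑ n ∈ Finset.Icc 1 N, l n * (A n / L n) ^ (-p))
      ≤ ((p + 1) / p) ^ q * (∑ n ∈ Finset.Icc 1 N, l n * (A n / L n) ^ (-p + q) * (a n) ^ (-q))
        - (q / (p + 1)) * L N * (A N / L N) ^ (-p) :=
  stmt4_general p q hq hpq a l ha hl L A hL hA N
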